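/- arXiv:1704.03535 — 7 statements merged into one kernel-verified Lean document; each statement's English description precedes it below -/
import Mathlib

section
/- If f̂ and f̃ are dc functions on a convex set D ⊆ ℝⁿ, then their product f̂·f̃ is dc on D. -/
/-!
If `f = g - h` with `g`, `h` convex and nonnegative on `D`, then
`f² = 2 (g² + h²) - (g + h)²` is again dc, since the square of a nonnegative convex function is
convex; the product follows from `f₁ f₂ = ½ [(f₁ + f₂)² - f₁² - f₂²]`.
Nonnegative parts can always be chosen because a convex function on a convex subset of a
finite-dimensional space has an affine minorant: a supporting hyperplane of its epigraph at an
interior point, once an affine retraction onto the affine span of `D` has made the interior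
nonempty.
-/

open Set

section AffineMinorant

variable {E : Type*} [NormedAddCommGroup E] [NormedSpace ℝ E] [FiniteDimensional ℝ E]
  {D : Set E} {g : E → ℝ}

lemma ConvexOn.exists_subgradient_on_interior {x₀ : E} (hg : ConvexOn ℝ D g)
    (hx₀ : x₀ ∈ interior D) :
    ∃ φ : E →L[ℝ] ℝ, ∀ x ∈ interior D, g x₀ + φ (x - x₀) ≤ g x := by
  set U : Set (E × ℝ) := {p | p.1 ∈ interior D ∧ g p.1 < p.2}
  have hU_convex : Convex ℝ U :=
    (hg.subset interior_subset hg.1.interior).convex_strict_epigraph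
  have hU_open : IsOpen U := by
    have hU : U = (interior D ×ˢ univ) ∩ (fun p : E × ℝ => p.2 - g p.1) ⁻¹' Ioi 0 := by
      ext p; simp [U, sub_pos]
    rw [hU]
    exact (continuousOn_snd.sub (hg.continuousOn_interior.comp continuousOn_fst
      fun p hp => hp.1)).isOpen_inter_preimage (isOpen_interior.prod isOpen_univ) isOpen_Ioi
  obtain ⟨ℓ, hℓ⟩ := geometric_hahn_banach_open_point hU_convex hU_open
    (fun h => lt_irrefl _ h.2 : (x₀, g x₀) ∉ U)
  set β := ℓ (0, 1)
  set ψ := ℓ.comp (ContinuousLinearMap.inl ℝ E ℝ)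
  have hℓ_apply (x : E) (t : ℝ) : ℓ (x, t) = ψ x + t * β := by
    rw [show (x, t) = (x, 0) + t • ((0 : E), (1 : ℝ)) by simp, map_add, map_smul]
    simp [ψ, β]
  have hβ : β < 0 := by
    have := hℓ (x₀, g x₀ + 1) ⟨hx₀, lt_add_one _⟩
    rw [hℓ_apply, hℓ_apply] at this
    linarith
  refine ⟨(-β)⁻¹ • ψ, fun x hx => ?_⟩
  have hsep : ψ x + g x * β ≤ ψ x₀ + g x₀ * β := by
    refine le_of_forall_pos_lt_add fun ε hε => ?_
    have := hℓ (x, g x + ε / -β) ⟨hx, by linarith [div_pos hε (neg_pos.2 hβ)]⟩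
    rw [hℓ_apply, hℓ_apply] at this
    have hεβ : ε / -β * β = -ε := by field_simp [hβ.ne]
    linarith
  have hψ : (-β)⁻¹ * (ψ x - ψ x₀) ≤ g x - g x₀ :=
    (inv_mul_le_iff₀ (neg_pos.2 hβ)).2 (by linarith)
  simp only [FunLike.coe_smul, Pi.smul_apply, map_sub, smul_eq_mul] at hψ ⊢
  linarith

lemma ConvexOn.exists_subgradient_of_mem_interior {x₀ : E} (hg : ConvexOn ℝ D g)
    (hx₀ : x₀ ∈ interior D) : ∃ φ : E →L[ℝ] ℝ, ∀ x ∈ D, g x₀ + φ (x - x₀) ≤ g x := by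
  obtain ⟨φ, hφ⟩ := hg.exists_subgradient_on_interior hx₀
  set G : E → ℝ := fun x => g x - φ (x - x₀)
  have hG : ConvexOn ℝ D G := by
    refine ((hg.add ((-φ).toLinearMap.convexOn hg.1)).add_const (φ x₀)).congr fun x _ => ?_
    simp only [ContinuousLinearMap.toLinearMap_neg, LinearMap.coe_neg,
      ContinuousLinearMap.coe_coe, Pi.add_apply, Pi.neg_apply, map_sub, G]
    ring
  -- `x₀` is a local, hence global, minimum of the convex function `G`
  have hmin : IsMinOn G D x₀ := by
    refine IsMinOn.of_isLocalMinOn_of_convexOn (interior_subset hx₀) ?_ hG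
    filter_upwards [mem_nhdsWithin_of_mem_nhds (isOpen_interior.mem_nhds hx₀)] with x hx
    simp only [G, sub_self, map_zero, sub_zero]
    linarith [hφ x hx]
  refine ⟨φ, fun x hx => ?_⟩
  have : G x₀ ≤ G x := hmin hx
  simp only [G, sub_self, map_zero, sub_zero] at this
  linarith

lemma Convex.exists_affineMap_fixing_interior_preimage_nonempty (hD : Convex ℝ D)
    (hne : D.Nonempty) :
    ∃ σ : E →ᵃ[ℝ] E, (∀ x ∈ D, σ x = x) ∧ (interior (σ ⁻¹' D)).Nonempty := by
  obtain ⟨x₀, hx₀⟩ := hne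
  obtain ⟨W, hW⟩ := (vectorSpan ℝ D).exists_isCompl
  set π := (vectorSpan ℝ D).projection W hW
  let σ : E →ᵃ[ℝ] E := AffineMap.mk' (fun y => π (y - x₀) + x₀) π x₀ (fun y => by simp)
  have hσ_fix (x : E) (hx : x ∈ D) : σ x = x := by
    have hxV : x - x₀ ∈ vectorSpan ℝ D := vsub_mem_vectorSpan ℝ hx hx₀
    have hπ : π (x - x₀) = x - x₀ := Submodule.projection_apply_of_mem_left hW hxV
    simp only [σ, AffineMap.coe_mk', hπ, sub_add_cancel]
  -- σ⁻¹' D contains D and x₀ + W, so its vector span contains `vectorSpan D ⊔ W = ⊤`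
  have hD_sub : D ⊆ σ ⁻¹' D := fun x hx => by simp [hσ_fix x hx, hx]
  have hW_sub : W ≤ vectorSpan ℝ (σ ⁻¹' D) := fun w hw => by
    have hmem : w + x₀ ∈ σ ⁻¹' D := by
      simp [σ, π, Submodule.projection_apply_right hW ⟨w, hw⟩, hx₀]
    simpa using vsub_mem_vectorSpan ℝ hmem (hD_sub hx₀)
  refine ⟨σ, hσ_fix, ?_⟩
  rw [(hD.affine_preimage σ).interior_nonempty_iff_affineSpan_eq_top,
    AffineSubspace.affineSpan_eq_top_iff_vectorSpan_eq_top_of_nonempty ℝ E E ⟨x₀, hD_sub hx₀⟩,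
    eq_top_iff, ← hW.sup_eq_top]
  exact sup_le (vectorSpan_mono ℝ hD_sub) hW_sub

lemma ConvexOn.exists_affine_le (hg : ConvexOn ℝ D g) :
    ∃ (φ : E →L[ℝ] ℝ) (c : ℝ), ∀ x ∈ D, φ x + c ≤ g x := by
  rcases D.eq_empty_or_nonempty with rfl | hne
  · exact ⟨0, 0, by simp⟩
  obtain ⟨σ, hσ_fix, y₀, hy₀⟩ := hg.1.exists_affineMap_fixing_interior_preimage_nonempty hne
  obtain ⟨φ, hφ⟩ := (hg.comp_affineMap σ).exists_subgradient_of_mem_interior hy₀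
  refine ⟨φ, g (σ y₀) - φ y₀, fun x hx => ?_⟩
  have := hφ x (by simpa [hσ_fix x hx] using hx)
  simp only [Function.comp_apply, hσ_fix x hx, map_sub] at this
  linarith

end AffineMinorant

section DC

variable {E : Type*} [AddCommGroup E] [Module ℝ E]

def IsDCOn (D : Set E) (f : E → ℝ) : Prop :=
  ∃ g h : E → ℝ, ConvexOn ℝ D g ∧ ConvexOn ℝ D h ∧ ∀ x ∈ D, f x = g x - h x

namespace IsDCOn

variable {D : Set E} {f f₁ f₂ : E → ℝ}

lemma congr (hf : IsDCOn D f₁) (h : EqOn f₁ f₂ D) : IsDCOn D f₂ := by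
  obtain ⟨g, k, hg, hk, hf⟩ := hf
  exact ⟨g, k, hg, hk, fun x hx => (h hx).symm.trans (hf x hx)⟩

lemma add (hf₁ : IsDCOn D f₁) (hf₂ : IsDCOn D f₂) : IsDCOn D (f₁ + f₂) := by
  obtain ⟨g₁, h₁, hg₁, hh₁, hf₁⟩ := hf₁
  obtain ⟨g₂, h₂, hg₂, hh₂, hf₂⟩ := hf₂
  refine ⟨g₁ + g₂, h₁ + h₂, hg₁.add hg₂, hh₁.add hh₂, fun x hx => ?_⟩
  simp only [Pi.add_apply, hf₁ x hx, hf₂ x hx]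
  ring

lemma sub (hf₁ : IsDCOn D f₁) (hf₂ : IsDCOn D f₂) : IsDCOn D (f₁ - f₂) := by
  obtain ⟨g₁, h₁, hg₁, hh₁, hf₁⟩ := hf₁
  obtain ⟨g₂, h₂, hg₂, hh₂, hf₂⟩ := hf₂
  refine ⟨g₁ + h₂, h₁ + g₂, hg₁.add hh₂, hh₁.add hg₂, fun x hx => ?_⟩
  simp only [Pi.add_apply, Pi.sub_apply, hf₁ x hx, hf₂ x hx]
  ring

lemma const_smul (hf : IsDCOn D f) (c : ℝ) : IsDCOn D (c • f) := by
  obtain ⟨g, h, hg, hh, hf⟩ := hf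
  rcases le_total 0 c with hc | hc
  · refine ⟨c • g, c • h, hg.smul hc, hh.smul hc, fun x hx => ?_⟩
    simp only [Pi.smul_apply, smul_eq_mul, hf x hx]
    ring
  · refine ⟨(-c) • h, (-c) • g, hh.smul (neg_nonneg.2 hc), hg.smul (neg_nonneg.2 hc),
      fun x hx => ?_⟩
    simp only [Pi.smul_apply, smul_eq_mul, hf x hx]
    ring

end IsDCOn

end DC

section FiniteDimensional

variable {E : Type*} [NormedAddCommGroup E] [NormedSpace ℝ E] [FiniteDimensional ℝ E]
  {D : Set E} {f f₁ f₂ : E → ℝ}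

lemma IsDCOn.exists_nonneg (hf : IsDCOn D f) :
    ∃ g h : E → ℝ, ConvexOn ℝ D g ∧ ConvexOn ℝ D h ∧ (∀ x ∈ D, 0 ≤ g x) ∧
      (∀ x ∈ D, 0 ≤ h x) ∧ ∀ x ∈ D, f x = g x - h x := by
  obtain ⟨g, h, hg, hh, hf⟩ := hf
  obtain ⟨φ, a, hφ⟩ := hg.exists_affine_le
  obtain ⟨ψ, b, hψ⟩ := hh.exists_affine_le
  -- `m` is a convex majorant of both `-g` and `-h`
  set m : E → ℝ := fun x => max (-φ x - a) (-ψ x - b)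
  have hm : ConvexOn ℝ D m :=
    (((-φ).toLinearMap.convexOn hg.1).add_const (-a)).sup
      (((-ψ).toLinearMap.convexOn hg.1).add_const (-b))
  refine ⟨g + m, h + m, hg.add hm, hh.add hm, fun x hx => ?_, fun x hx => ?_, fun x hx => ?_⟩
  · simp only [Pi.add_apply, m]
    linarith [hφ x hx, le_max_left (-φ x - a) (-ψ x - b)]
  · simp only [Pi.add_apply, m]
    linarith [hψ x hx, le_max_right (-φ x - a) (-ψ x - b)]
  · simp only [Pi.add_apply, hf x hx]
    ring

lemma IsDCOn.sq (hf : IsDCOn D f) : IsDCOn D (f ^ 2) := by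
  obtain ⟨g, h, hg, hh, hg₀, hh₀, hf⟩ := hf.exists_nonneg
  refine ⟨(2 : ℝ) • (g ^ 2 + h ^ 2), (g + h) ^ 2,
    ((hg.pow hg₀ 2).add (hh.pow hh₀ 2)).smul zero_le_two,
    (hg.add hh).pow (fun x hx => add_nonneg (hg₀ x hx) (hh₀ x hx)) 2, fun x hx => ?_⟩
  simp only [Pi.pow_apply, Pi.add_apply, Pi.smul_apply, smul_eq_mul, hf x hx]
  ring

lemma IsDCOn.mul (hf₁ : IsDCOn D f₁) (hf₂ : IsDCOn D f₂) : IsDCOn D (f₁ * f₂) :=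
  (((hf₁.add hf₂).sq.sub hf₁.sq).sub hf₂.sq).const_smul (1 / 2) |>.congr fun x _ => by
    simp only [Pi.smul_apply, Pi.sub_apply, Pi.pow_apply, Pi.add_apply, Pi.mul_apply, smul_eq_mul]
    ring

end FiniteDimensional

theorem product_of_dc_is_dc_general (n : ℕ) (D : Set (Fin n → ℝ))
    (f₁ f₂ : (Fin n → ℝ) → ℝ)
    (hf₁ : ∃ g h : (Fin n → ℝ) → ℝ, ConvexOn ℝ D g ∧ ConvexOn ℝ D h ∧
      ∀ x ∈ D, f₁ x = g x - h x)
    (hf₂ : ∃ g h : (Fin n → ℝ) → ℝ, ConvexOn ℝ D g ∧ ConvexOn ℝ D h ∧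
      ∀ x ∈ D, f₂ x = g x - h x) :
    ∃ g h : (Fin n → ℝ) → ℝ, ConvexOn ℝ D g ∧ ConvexOn ℝ D h ∧
      ∀ x ∈ D, f₁ x * f₂ x = g x - h x :=
  IsDCOn.mul hf₁ hf₂

theorem product_of_dc_is_dc (n : ℕ) (D : Set (Fin n → ℝ)) (hD : Convex ℝ D)
    (f₁ f₂ : (Fin n → ℝ) → ℝ)
    (hf₁ : ∃ g h : (Fin n → ℝ) → ℝ, ConvexOn ℝ D g ∧ ConvexOn ℝ D h ∧
      ∀ x ∈ D, f₁ x = g x - h x)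
    (hf₂ : ∃ g h : (Fin n → ℝ) → ℝ, ConvexOn ℝ D g ∧ ConvexOn ℝ D h ∧
      ∀ x ∈ D, f₂ x = g x - h x) :
    ∃ g h : (Fin n → ℝ) → ℝ, ConvexOn ℝ D g ∧ ConvexOn ℝ D h ∧
      ∀ x ∈ D, f₁ x * f₂ x = g x - h x :=
  product_of_dc_is_dc_general n D f₁ f₂ hf₁ hf₂
end

section
/- Let p(·,ω) and q(·,ω) be convex on a convex set D ⊆ ℝⁿ for each ω in a finite sample space, and f(x,ω) = p(x,ω) - q(x,ω). Then for α ∈ (0,1), CVaR_α(f(x,·)) = min_{t∈ℝ} { t + (1/(1-α)) 𝔼 max(p(x,ω̃)-t, q(x,ω̃)) } - (1/(1-α)) 𝔼 q(x,ω̃), and the first term (the minimum over t) is a convex function of x while the second term is convex in x; hence CVaR_α(f(x,ω̃)) is dc in x. -/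
section Aux

variable {n S : ℕ} {D : Set (Fin n → ℝ)} {c : ℝ} {prob : Fin S → ℝ}
  {p q : (Fin n → ℝ) → Fin S → ℝ}

/-- Lower bound for the CVaR objective. -/
private lemma cvar_aux_lb (hc : 1 ≤ c) (hprob : ∀ s, 0 < prob s) (hsum : ∑ s, prob s = 1)
    (x : Fin n → ℝ) (t : ℝ) :
    (∑ s, prob s * p x s) + (c - 1) * ∑ s, prob s * q x s ≤
      t + c * ∑ s, prob s * max (p x s - t) (q x s) := by
  have key : ∀ s : Fin S, prob s * (p x s - t) + (c - 1) * (prob s * q x s) ≤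
      c * (prob s * max (p x s - t) (q x s)) := by
    intro s
    have h1 := le_max_left (p x s - t) (q x s)
    have h2 := le_max_right (p x s - t) (q x s)
    have hps := (hprob s).le
    nlinarith [mul_le_mul_of_nonneg_left h1 hps, mul_le_mul_of_nonneg_left h2 hps,
      mul_le_mul_of_nonneg_left (mul_le_mul_of_nonneg_left h2 hps) (by linarith : (0:ℝ) ≤ c - 1)]
  have hsumle : ∑ s, (prob s * (p x s - t) + (c - 1) * (prob s * q x s)) ≤
      ∑ s, c * (prob s * max (p x s - t) (q x s)) :=
    Finset.sum_le_sum fun s _ => key s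
  have e1 : ∑ s, (prob s * (p x s - t) + (c - 1) * (prob s * q x s)) =
      (∑ s, prob s * p x s) - t + (c - 1) * ∑ s, prob s * q x s := by
    rw [Finset.sum_add_distrib, ← Finset.mul_sum]
    congr 1
    simp only [mul_sub, Finset.sum_sub_distrib]
    rw [← Finset.sum_mul, hsum, one_mul]
  have e2 : ∑ s, c * (prob s * max (p x s - t) (q x s)) =
      c * ∑ s, prob s * max (p x s - t) (q x s) := by
    rw [Finset.mul_sum]
  rw [e1, e2] at hsumle
  linarith

private lemma cvar_aux_bdd (hc : 1 ≤ c) (hprob : ∀ s, 0 < prob s) (hsum : ∑ s, prob s = 1)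
    (x : Fin n → ℝ) :
    BddBelow (Set.range fun t : ℝ => t + c * ∑ s, prob s * max (p x s - t) (q x s)) := by
  refine ⟨(∑ s, prob s * p x s) + (c - 1) * ∑ s, prob s * q x s, ?_⟩
  rintro v ⟨t, rfl⟩
  exact cvar_aux_lb hc hprob hsum x t

/-- Joint convexity inequality. -/
private lemma cvar_aux_joint (hprob : ∀ s, 0 < prob s) (hc0 : 0 ≤ c)
    (hp : ∀ s, ConvexOn ℝ D fun x => p x s) (hq : ∀ s, ConvexOn ℝ D fun x => q x s)
    {x y : Fin n → ℝ} (hx : x ∈ D) (hy : y ∈ D) {a b : ℝ} (ha : 0 ≤ a) (hb : 0 ≤ b)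
    (hab : a + b = 1) (t1 t2 : ℝ) :
    (a * t1 + b * t2) + c * ∑ s, prob s *
        max (p (a • x + b • y) s - (a * t1 + b * t2)) (q (a • x + b • y) s) ≤
      a * (t1 + c * ∑ s, prob s * max (p x s - t1) (q x s)) +
      b * (t2 + c * ∑ s, prob s * max (p y s - t2) (q y s)) := by
  have hmax : ∀ s, max (p (a • x + b • y) s - (a * t1 + b * t2)) (q (a • x + b • y) s) ≤
      a * max (p x s - t1) (q x s) + b * max (p y s - t2) (q y s) := by
    intro s
    have hpz : p (a • x + b • y) s ≤ a * p x s + b * p y s := by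
      have := (hp s).2 hx hy ha hb hab; simpa [smul_eq_mul] using this
    have hqz : q (a • x + b • y) s ≤ a * q x s + b * q y s := by
      have := (hq s).2 hx hy ha hb hab; simpa [smul_eq_mul] using this
    have m1x := le_max_left (p x s - t1) (q x s)
    have m1y := le_max_left (p y s - t2) (q y s)
    have m2x := le_max_right (p x s - t1) (q x s)
    have m2y := le_max_right (p y s - t2) (q y s)
    apply max_le
    · nlinarith [mul_le_mul_of_nonneg_left m1x ha, mul_le_mul_of_nonneg_left m1y hb]
    · nlinarith [mul_le_mul_of_nonneg_left m2x ha, mul_le_mul_of_nonneg_left m2y hb]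
  have hs : ∑ s, prob s * max (p (a • x + b • y) s - (a * t1 + b * t2)) (q (a • x + b • y) s) ≤
      a * (∑ s, prob s * max (p x s - t1) (q x s)) +
      b * (∑ s, prob s * max (p y s - t2) (q y s)) := by
    calc ∑ s, prob s * max (p (a • x + b • y) s - (a * t1 + b * t2)) (q (a • x + b • y) s)
        ≤ ∑ s, prob s * (a * max (p x s - t1) (q x s) + b * max (p y s - t2) (q y s)) :=
          Finset.sum_le_sum fun s _ => mul_le_mul_of_nonneg_left (hmax s) (hprob s).le
      _ = a * (∑ s, prob s * max (p x s - t1) (q x s)) +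
          b * (∑ s, prob s * max (p y s - t2) (q y s)) := by
          rw [Finset.mul_sum, Finset.mul_sum, ← Finset.sum_add_distrib]
          exact Finset.sum_congr rfl fun s _ => by ring
  nlinarith [mul_le_mul_of_nonneg_left hs hc0]

/-- Convexity of the partial minimization. -/
private lemma cvar_aux_conv (hD : Convex ℝ D) (hc : 1 ≤ c)
    (hprob : ∀ s, 0 < prob s) (hsum : ∑ s, prob s = 1)
    (hp : ∀ s, ConvexOn ℝ D fun x => p x s) (hq : ∀ s, ConvexOn ℝ D fun x => q x s) :
    ConvexOn ℝ D (fun x =>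
      sInf (Set.range fun t : ℝ => t + c * ∑ s, prob s * max (p x s - t) (q x s))) := by
  have hc0 : (0 : ℝ) ≤ c := le_trans zero_le_one hc
  refine convexOn_iff_forall_pos.mpr ⟨hD, ?_⟩
  intro x hx y hy a b ha hb hab
  set F : (Fin n → ℝ) → ℝ := fun x =>
    sInf (Set.range fun t : ℝ => t + c * ∑ s, prob s * max (p x s - t) (q x s)) with hF
  have key : ∀ t1 t2 : ℝ, F (a • x + b • y) ≤
      a * (t1 + c * ∑ s, prob s * max (p x s - t1) (q x s)) +
      b * (t2 + c * ∑ s, prob s * max (p y s - t2) (q y s)) := by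
    intro t1 t2
    refine le_trans (csInf_le (cvar_aux_bdd hc hprob hsum _) ⟨a * t1 + b * t2, rfl⟩) ?_
    exact cvar_aux_joint hprob hc0 hp hq hx hy ha.le hb.le hab t1 t2
  have step1 : ∀ t2 : ℝ, F (a • x + b • y) ≤
      a * F x + b * (t2 + c * ∑ s, prob s * max (p y s - t2) (q y s)) := by
    intro t2
    have h1 : (F (a • x + b • y) -
        b * (t2 + c * ∑ s, prob s * max (p y s - t2) (q y s))) / a ≤ F x := by
      apply le_csInf (Set.range_nonempty _)
      rintro v ⟨t1, rfl⟩
      rw [div_le_iff₀ ha]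
      beta_reduce
      nlinarith [key t1 t2]
    have h2 := (div_le_iff₀ ha).mp h1
    nlinarith
  have h1 : (F (a • x + b • y) - a * F x) / b ≤ F y := by
    apply le_csInf (Set.range_nonempty _)
    rintro v ⟨t2, rfl⟩
    rw [div_le_iff₀ hb]
    beta_reduce
    nlinarith [step1 t2]
  have h2 := (div_le_iff₀ hb).mp h1
  simp only [smul_eq_mul]
  nlinarith

end Aux

theorem cvar_of_dc_is_dc (n S : ℕ) (D : Set (Fin n → ℝ)) (hD : Convex ℝ D)
    (α : ℝ) (hα : α ∈ Set.Ioo (0 : ℝ) 1)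
    (prob : Fin S → ℝ) (hprob : ∀ s, 0 < prob s) (hsum : ∑ s, prob s = 1)
    (p q f : (Fin n → ℝ) → Fin S → ℝ)
    (hp : ∀ s, ConvexOn ℝ D (fun x => p x s))
    (hq : ∀ s, ConvexOn ℝ D (fun x => q x s))
    (hf : ∀ x ∈ D, ∀ s, f x s = p x s - q x s) :
    (∀ x ∈ D,
      sInf (Set.range fun t : ℝ =>
          t + (1 / (1 - α)) * ∑ s, prob s * max (f x s - t) 0) =
        sInf (Set.range fun t : ℝ =>
          t + (1 / (1 - α)) * ∑ s, prob s * max (p x s - t) (q x s)) -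
        (1 / (1 - α)) * ∑ s, prob s * q x s) ∧
    ConvexOn ℝ D (fun x =>
      sInf (Set.range fun t : ℝ =>
        t + (1 / (1 - α)) * ∑ s, prob s * max (p x s - t) (q x s))) ∧
    ConvexOn ℝ D (fun x => (1 / (1 - α)) * ∑ s, prob s * q x s) ∧
    (∃ u v : (Fin n → ℝ) → ℝ, ConvexOn ℝ D u ∧ ConvexOn ℝ D v ∧
      ∀ x ∈ D,
        sInf (Set.range fun t : ℝ =>
          t + (1 / (1 - α)) * ∑ s, prob s * max (f x s - t) 0) = u x - v x) := by
  obtain ⟨hα0, hα1⟩ := hα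
  have h1α : 0 < 1 - α := by linarith
  have hc : 1 ≤ 1 / (1 - α) := by
    rw [le_div_iff₀ h1α]; linarith
  have hc0 : (0 : ℝ) ≤ 1 / (1 - α) := le_trans zero_le_one hc
  -- Part 1: translation identity
  have part1 : ∀ x ∈ D,
      sInf (Set.range fun t : ℝ =>
          t + (1 / (1 - α)) * ∑ s, prob s * max (f x s - t) 0) =
        sInf (Set.range fun t : ℝ =>
          t + (1 / (1 - α)) * ∑ s, prob s * max (p x s - t) (q x s)) -
        (1 / (1 - α)) * ∑ s, prob s * q x s := by
    intro x hx
    have hg : (fun t : ℝ => t + (1 / (1 - α)) * ∑ s, prob s * max (f x s - t) 0) =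
        (fun y : ℝ => y + -((1 / (1 - α)) * ∑ s, prob s * q x s)) ∘
          (fun t : ℝ => t + (1 / (1 - α)) * ∑ s, prob s * max (p x s - t) (q x s)) := by
      funext t
      have e : ∀ s : Fin S, prob s * max (f x s - t) 0 =
          prob s * max (p x s - t) (q x s) - prob s * q x s := by
        intro s
        have hmx : max (f x s - t) 0 = max (p x s - t) (q x s) - q x s := by
          rw [hf x hx s]
          rcases le_total (p x s - t) (q x s) with h | h
          · rw [max_eq_right h, max_eq_right (by linarith), sub_self]
          · rw [max_eq_left h, max_eq_left (by linarith)]; ring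
        rw [hmx, mul_sub]
      simp only [Function.comp]
      rw [Finset.sum_congr rfl (fun s _ => e s), Finset.sum_sub_distrib, mul_sub]
      ring
    rw [hg, Set.range_comp]
    have := (OrderIso.addRight (-((1 / (1 - α)) * ∑ s, prob s * q x s))).map_csInf'
      (Set.range_nonempty (fun t : ℝ =>
        t + (1 / (1 - α)) * ∑ s, prob s * max (p x s - t) (q x s)))
      (cvar_aux_bdd hc hprob hsum x)
    simp only [OrderIso.addRight_apply] at this
    rw [← this]
    ring
  refine ⟨part1, cvar_aux_conv hD hc hprob hsum hp hq, ?_, ?_⟩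
  · -- convexity of the second term
    refine ⟨hD, ?_⟩
    intro x hx y hy a b ha hb hab
    have hqz : ∀ s, q (a • x + b • y) s ≤ a * q x s + b * q y s := by
      intro s
      have := (hq s).2 hx hy ha hb hab; simpa [smul_eq_mul] using this
    have hs : ∑ s, prob s * q (a • x + b • y) s ≤
        a * (∑ s, prob s * q x s) + b * (∑ s, prob s * q y s) := by
      calc ∑ s, prob s * q (a • x + b • y) s
          ≤ ∑ s, prob s * (a * q x s + b * q y s) :=
            Finset.sum_le_sum fun s _ => mul_le_mul_of_nonneg_left (hqz s) (hprob s).le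
        _ = a * (∑ s, prob s * q x s) + b * (∑ s, prob s * q y s) := by
            rw [Finset.mul_sum, Finset.mul_sum, ← Finset.sum_add_distrib]
            exact Finset.sum_congr rfl fun s _ => by ring
    simp only [smul_eq_mul]
    nlinarith [mul_le_mul_of_nonneg_left hs hc0]
  · exact ⟨_, _, cvar_aux_conv hD hc hprob hsum hp hq,
      by
        refine ⟨hD, ?_⟩
        intro x hx y hy a b ha hb hab
        have hqz : ∀ s, q (a • x + b • y) s ≤ a * q x s + b * q y s := by
          intro s
          have := (hq s).2 hx hy ha hb hab; simpa [smul_eq_mul] using this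
        have hs : ∑ s, prob s * q (a • x + b • y) s ≤
            a * (∑ s, prob s * q x s) + b * (∑ s, prob s * q y s) := by
          calc ∑ s, prob s * q (a • x + b • y) s
              ≤ ∑ s, prob s * (a * q x s + b * q y s) :=
                Finset.sum_le_sum fun s _ => mul_le_mul_of_nonneg_left (hqz s) (hprob s).le
            _ = a * (∑ s, prob s * q x s) + b * (∑ s, prob s * q y s) := by
                rw [Finset.mul_sum, Finset.mul_sum, ← Finset.sum_add_distrib]
                exact Finset.sum_congr rfl fun s _ => by ring
        simp only [smul_eq_mul]
        nlinarith [mul_le_mul_of_nonneg_left hs hc0],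
      part1⟩
end

section
/- Let u(t) = min_{1≤i≤I} (a_i t + α_i) with a_i ≥ 0 be a concave piecewise linear utility, and let f(x,ω) = p(x,ω) - q(x,ω) with p(·,ω), q(·,ω) convex on a convex set D. Then for each ω and η, u(f(x,ω) - η) = (Σᵢ a_i) p(x,ω) - max_{1≤i≤I} { (Σ_{i'≠i} a_{i'}) p(x,ω) + a_i (q(x,ω) + η) - α_i }, where the max term is jointly convex in (x,η). -/
/-!
Writing `S = ∑ i, a i`, each affine piece of the utility satisfies
`a i * (p - q - η) + α i = S * p - ((S - a i) * p + a i * (q + η) - α i)`, so the minimum of the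
pieces is `S * p` minus the maximum of the bracketed terms. Since `a i ≥ 0` and `S - a i ≥ 0`,
every bracketed term is a nonnegative combination of `p`, `q` and an affine function of `η`,
hence jointly convex in `(x, η)`, and a finite maximum of convex functions is convex.
-/

open Set

theorem Finset.sub_inf' {ι α : Type*} [AddGroup α] [LinearOrder α] [AddLeftMono α]
    [AddRightMono α] {s : Finset ι} (hs : s.Nonempty) (f : ι → α) (c : α) :
    c - s.inf' hs f = s.sup' hs fun i => c - f i :=
  map_finset_inf' (OrderIso.subLeft c) hs f

section Convex

variable {𝕜 E F β ι : Type*} [Semiring 𝕜] [PartialOrder 𝕜] [AddCommMonoid E] [AddCommMonoid F]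
  [Module 𝕜 E] [Module 𝕜 F]

theorem ConvexOn.comp_fst [AddCommMonoid β] [PartialOrder β] [SMul 𝕜 β] {s : Set E} {f : E → β}
    (hf : ConvexOn 𝕜 s f) : ConvexOn 𝕜 (s ×ˢ (univ : Set F)) fun z => f z.1 := by
  rw [prod_univ]
  exact hf.comp_linearMap (LinearMap.fst 𝕜 E F)

theorem ConvexOn.finset_sup' [AddCommMonoid β] [LinearOrder β] [IsOrderedAddMonoid β]
    [Module 𝕜 β] [PosSMulStrictMono 𝕜 β] {s : Set E} {t : Finset ι} (ht : t.Nonempty)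
    {f : ι → E → β} (hf : ∀ i ∈ t, ConvexOn 𝕜 s (f i)) :
    ConvexOn 𝕜 s fun x => t.sup' ht fun i => f i x := by
  convert Finset.sup'_induction ht f (fun _ h₁ _ h₂ => h₁.sup h₂) hf using 1
  exact funext fun x => (Finset.sup'_apply ht f x).symm

end Convex

theorem oce_utility_identity (n I : ℕ) (Ω : Type*) (D : Set (Fin n → ℝ))
    (hD : Convex ℝ D)
    (a α : Fin (I + 1) → ℝ) (ha : ∀ i, 0 ≤ a i)
    (p q : (Fin n → ℝ) → Ω → ℝ)
    (hp : ∀ ω, ConvexOn ℝ D (fun x => p x ω))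
    (hq : ∀ ω, ConvexOn ℝ D (fun x => q x ω)) :
    (∀ ω, ∀ η : ℝ, ∀ x ∈ D,
      (Finset.univ.inf' Finset.univ_nonempty
          (fun i => a i * (p x ω - q x ω - η) + α i)) =
        (∑ i, a i) * p x ω -
          Finset.univ.sup' Finset.univ_nonempty
            (fun i => (∑ i' ∈ Finset.univ.erase i, a i') * p x ω
              + a i * (q x ω + η) - α i)) ∧
    (∀ ω, ConvexOn ℝ (D ×ˢ (Set.univ : Set ℝ))
      (fun xη : (Fin n → ℝ) × ℝ =>
        Finset.univ.sup' Finset.univ_nonempty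
          (fun i => (∑ i' ∈ Finset.univ.erase i, a i') * p xη.1 ω
            + a i * (q xη.1 ω + xη.2) - α i))) := by
  refine ⟨fun ω η x _ => ?_, fun ω => ConvexOn.finset_sup' _ fun i _ => ?_⟩
  · set S := ∑ i, a i
    calc _ = S * p x ω - (S * p x ω - Finset.univ.inf' Finset.univ_nonempty
            fun i => a i * (p x ω - q x ω - η) + α i) := by ring
      _ = _ := by
        rw [Finset.sub_inf']
        congr 1
        refine Finset.sup'_congr _ rfl fun i _ => ?_
        rw [Finset.sum_erase_eq_sub (Finset.mem_univ i)]
        ring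
  · have hrest : 0 ≤ ∑ i' ∈ Finset.univ.erase i, a i' := Finset.sum_nonneg fun j _ => ha j
    have hη : ConvexOn ℝ (D ×ˢ (univ : Set ℝ)) fun xη : (Fin n → ℝ) × ℝ => xη.2 :=
      (LinearMap.snd ℝ _ ℝ).convexOn (hD.prod convex_univ)
    refine ((((hp ω).comp_fst.smul hrest).add
      (((hq ω).comp_fst.add hη).smul (ha i))).add_const (-α i)).congr fun xη _ => ?_
    simp only [Pi.add_apply, smul_eq_mul, sub_eq_add_neg]
end

section
/- Let b : ℝ → ℝ be convex and non-decreasing, and m(x) = p(x) - max_{1≤i≤I} ((aⁱ)ᵀx + α_i) with p convex on a convex set D ⊆ ℝⁿ. Then b ∘ m (x) = min_{1≤i≤I} b(p(x) - (aⁱ)ᵀx - α_i), each function x ↦ b(p(x) - (aⁱ)ᵀx - α_i) is convex on D, and therefore b ∘ m is dc on D. -/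
private lemma convexOn_finset_sup' {ι E : Type*} [AddCommMonoid E] [Module ℝ E]
    {D : Set E} (f : ι → E → ℝ) (hf : ∀ i, ConvexOn ℝ D (f i)) (s : Finset ι)
    (hs : s.Nonempty) : ConvexOn ℝ D (fun x => s.sup' hs fun i => f i x) := by
  induction hs using Finset.Nonempty.cons_induction with
  | singleton a => simpa using hf a
  | cons a s h hs ih =>
      have : (fun x => (Finset.cons a s h).sup' (Finset.cons_nonempty h) fun i => f i x)
          = (f a ⊔ fun x => s.sup' hs fun i => f i x) := by
        funext x; rw [Finset.sup'_cons hs]; rfl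
      rw [this]
      exact (hf a).sup ih

private lemma convexOn_finset_sum {ι E : Type*} [AddCommMonoid E] [Module ℝ E]
    {D : Set E} (hD : Convex ℝ D) (f : ι → E → ℝ) (s : Finset ι)
    (hf : ∀ i ∈ s, ConvexOn ℝ D (f i)) :
    ConvexOn ℝ D (fun x => ∑ i ∈ s, f i x) := by
  induction s using Finset.cons_induction with
  | empty => simpa using convexOn_const 0 hD
  | cons a s h ih =>
      have : (fun x => ∑ i ∈ Finset.cons a s h, f i x)
          = (fun x => f a x + ∑ i ∈ s, f i x) := by
        funext x; rw [Finset.sum_cons]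
      rw [this]
      exact (hf a (Finset.mem_cons_self a s)).add
        (ih fun i hi => hf i (Finset.mem_cons_of_mem hi))

theorem convex_increasing_compose_special_dc (n I : ℕ) (D : Set (Fin n → ℝ))
    (hD : Convex ℝ D)
    (b : ℝ → ℝ) (hb : ConvexOn ℝ Set.univ b) (hbmono : Monotone b)
    (p : (Fin n → ℝ) → ℝ) (hp : ConvexOn ℝ D p)
    (a : Fin (I + 1) → Fin n → ℝ) (α : Fin (I + 1) → ℝ)
    (m : (Fin n → ℝ) → ℝ)
    (hm : ∀ x ∈ D, m x = p x -
      Finset.univ.sup' Finset.univ_nonempty (fun i => (∑ j, a i j * x j) + α i)) :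
    (∀ x ∈ D, b (m x) =
      Finset.univ.inf' Finset.univ_nonempty
        (fun i => b (p x - (∑ j, a i j * x j) - α i))) ∧
    (∀ i, ConvexOn ℝ D (fun x => b (p x - (∑ j, a i j * x j) - α i))) ∧
    (∃ u v : (Fin n → ℝ) → ℝ, ConvexOn ℝ D u ∧ ConvexOn ℝ D v ∧
      ∀ x ∈ D, b (m x) = u x - v x) := by
  -- the inner convex functions
  set f : Fin (I + 1) → (Fin n → ℝ) → ℝ :=
    fun i x => b (p x - (∑ j, a i j * x j) - α i) with hf
  -- Part 1
  have part1 : ∀ x ∈ D, b (m x) =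
      Finset.univ.inf' Finset.univ_nonempty
        (fun i => b (p x - (∑ j, a i j * x j) - α i)) := by
    intro x hx
    rw [hm x hx]
    obtain ⟨i0, -, hi0⟩ := Finset.exists_mem_eq_sup' (Finset.univ_nonempty)
      (fun i => (∑ j, a i j * x j) + α i)
    rw [hi0]
    apply le_antisymm
    · apply Finset.le_inf'
      intro i _
      apply hbmono
      have hle : (∑ j, a i j * x j) + α i ≤ (∑ j, a i0 j * x j) + α i0 := by
        rw [← hi0]
        exact Finset.le_sup' (fun i => (∑ j, a i j * x j) + α i) (Finset.mem_univ i)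
      linarith
    · have heq : p x - ((∑ j, a i0 j * x j) + α i0)
          = p x - (∑ j, a i0 j * x j) - α i0 := by ring
      rw [heq]
      exact Finset.inf'_le (fun i => b (p x - (∑ j, a i j * x j) - α i))
        (Finset.mem_univ i0)
  -- Part 2
  have part2 : ∀ i, ConvexOn ℝ D (fun x => b (p x - (∑ j, a i j * x j) - α i)) := by
    intro i
    have haff : ConvexOn ℝ D (fun x => -(∑ j, a i j * x j) - α i) := by
      refine ⟨hD, fun x _ y _ t s ht hs hts => le_of_eq ?_⟩
      have hsum : ∑ j, a i j * (t • x + s • y) j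
          = t * (∑ j, a i j * x j) + s * (∑ j, a i j * y j) := by
        rw [Finset.mul_sum, Finset.mul_sum, ← Finset.sum_add_distrib]
        refine Finset.sum_congr rfl fun j _ => ?_
        simp [Pi.add_apply, Pi.smul_apply, smul_eq_mul]; ring
      simp only [smul_eq_mul, hsum]
      linear_combination (α i) * hts
    have hg : ConvexOn ℝ D (fun x => p x - (∑ j, a i j * x j) - α i) := by
      have heq : (fun x => p x - (∑ j, a i j * x j) - α i)
          = p + (fun x => -(∑ j, a i j * x j) - α i) := by
        funext x; simp only [Pi.add_apply]; ring
      rw [heq]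
      exact hp.add haff
    refine ⟨hD, fun x hx y hy t s ht hs hts => ?_⟩
    calc b ((fun x => p x - (∑ j, a i j * x j) - α i) (t • x + s • y))
        ≤ b (t • (p x - (∑ j, a i j * x j) - α i)
            + s • (p y - (∑ j, a i j * y j) - α i)) :=
          hbmono (hg.2 hx hy ht hs hts)
      _ ≤ t • b (p x - (∑ j, a i j * x j) - α i)
            + s • b (p y - (∑ j, a i j * y j) - α i) :=
          hb.2 (Set.mem_univ _) (Set.mem_univ _) ht hs hts
  -- Part 3
  refine ⟨part1, part2, ?_⟩
  set S : (Fin n → ℝ) → ℝ := fun x => ∑ i, f i x with hS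
  refine ⟨S, fun x => Finset.univ.sup' Finset.univ_nonempty
      (fun i => ∑ j ∈ Finset.univ.erase i, f j x), ?_, ?_, ?_⟩
  · exact convexOn_finset_sum hD f Finset.univ (fun i _ => part2 i)
  · exact convexOn_finset_sup' (fun i x => ∑ j ∈ Finset.univ.erase i, f j x)
      (fun i => convexOn_finset_sum hD f _ (fun j _ => part2 j)) Finset.univ
      Finset.univ_nonempty
  · intro x hx
    rw [part1 x hx]
    obtain ⟨i0, -, hi0⟩ := Finset.exists_mem_eq_inf' (Finset.univ_nonempty)
      (fun i => b (p x - (∑ j, a i j * x j) - α i))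
    have hsup : Finset.univ.sup' Finset.univ_nonempty
        (fun i => ∑ j ∈ Finset.univ.erase i, f j x) = S x - f i0 x := by
      apply le_antisymm
      · apply Finset.sup'_le
        intro i _
        rw [Finset.sum_erase_eq_sub (Finset.mem_univ i)]
        have : f i0 x ≤ f i x := by
          show b (p x - (∑ j, a i0 j * x j) - α i0) ≤ b (p x - (∑ j, a i j * x j) - α i)
          rw [← hi0]
          exact Finset.inf'_le (fun i => b (p x - (∑ j, a i j * x j) - α i))
            (Finset.mem_univ i)
        simp only [hS]
        linarith
      · rw [← Finset.sum_erase_eq_sub (Finset.mem_univ i0)]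
        exact Finset.le_sup' (fun i => ∑ j ∈ Finset.univ.erase i, f j x)
          (Finset.mem_univ i0)
    show _ = S x - Finset.univ.sup' Finset.univ_nonempty
      (fun i => ∑ j ∈ Finset.univ.erase i, f j x)
    rw [hsup, hi0]
    show b (p x - (∑ j, a i0 j * x j) - α i0)
      = S x - (S x - b (p x - (∑ j, a i0 j * x j) - α i0))
    ring
end

section
/- Let f(x) = p(x) - q(x) with p, q convex on a convex set D ⊆ ℝⁿ and inf_{x∈D} f(x) > 0. Set M = 1/inf_{x∈D} f(x). Then the function x ↦ -log(f(x)) + M·p(x) is convex on D; consequently, -log(f(x)) = [-log(f(x)) + M p(x)] - M p(x) is a dc decomposition on D. -/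
theorem neg_log_of_dc_decomposition (n : ℕ) (D : Set (Fin n → ℝ)) (hD : Convex ℝ D)
    (p q : (Fin n → ℝ) → ℝ) (hp : ConvexOn ℝ D p) (hq : ConvexOn ℝ D q)
    (f : (Fin n → ℝ) → ℝ) (hf : ∀ x ∈ D, f x = p x - q x)
    (M : ℝ) (hM : M = 1 / sInf (f '' D))
    (hpos : 0 < sInf (f '' D)) (hbound : ∀ x ∈ D, sInf (f '' D) ≤ f x) :
    ConvexOn ℝ D (fun x => -Real.log (f x) + M * p x) ∧
    (∀ x ∈ D, -Real.log (f x) = (-Real.log (f x) + M * p x) - M * p x) := by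
  constructor
  · refine ⟨hD, ?_⟩
    intro x hx y hy a b ha hb hab
    set z := a • x + b • y with hz
    have hzD : D.Mem z := hD hx hy ha hb hab
    have hfz : 0 < f z := lt_of_lt_of_le hpos (hbound z hzD)
    have hfx : 0 < f x := lt_of_lt_of_le hpos (hbound x hx)
    have hfy : 0 < f y := lt_of_lt_of_le hpos (hbound y hy)
    set v : ℝ := -(1 / f z) with hv
    have hvneg : 0 < -v := by rw [hv]; simp; positivity
    have hvM : 0 ≤ v + M := by
      rw [hv, hM]
      have h1 : 1 / f z ≤ 1 / sInf (f '' D) :=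
        one_div_le_one_div_of_le hpos (hbound z hzD)
      linarith
    have hlogv : Real.log (-v) = -Real.log (f z) := by
      rw [hv, neg_neg, one_div, Real.log_inv]
    have hvfz : v * f z = -1 := by
      rw [hv]; field_simp
    clear_value z v
    have key : ∀ w, w ∈ D → (v + M) * p w + (-v) * q w + 1 + Real.log (-v)
        ≤ -Real.log (f w) + M * p w := by
      intro w hw
      have hfw : 0 < f w := lt_of_lt_of_le hpos (hbound w hw)
      have h1 : Real.log (f w / f z) ≤ f w / f z - 1 :=
        Real.log_le_sub_one_of_pos (by positivity)
      rw [Real.log_div (ne_of_gt hfw) (ne_of_gt hfz)] at h1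
      have hfweq : f w = p w - q w := hf w hw
      have hvpq : v * p w - v * q w = v * f w := by rw [hfweq]; ring
      have hvw : f w / f z = -(v * f w) := by
        rw [div_eq_iff (ne_of_gt hfz)]
        linear_combination f w * hvfz
      rw [hvw] at h1
      rw [hlogv]
      linarith [hvpq, h1]
    have keyx := key x hx
    have keyy := key y hy
    have hpz : p z ≤ a * p x + b * p y := by
      rw [hz]; simpa using hp.2 hx hy ha hb hab
    have hqz : q z ≤ a * q x + b * q y := by
      rw [hz]; simpa using hq.2 hx hy ha hb hab
    have hC : (v + M) * p z ≤ (v + M) * (a * p x + b * p y) :=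
      mul_le_mul_of_nonneg_left hpz hvM
    have hDq : (-v) * q z ≤ (-v) * (a * q x + b * q y) :=
      mul_le_mul_of_nonneg_left hqz (le_of_lt hvneg)
    have hA := mul_le_mul_of_nonneg_left keyx ha
    have hB := mul_le_mul_of_nonneg_left keyy hb
    have hfzeq : f z = p z - q z := hf z hzD
    have hvpqz : v * p z - v * q z = -1 := by
      rw [← hvfz, hfzeq]; ring
    simp only [smul_eq_mul]
    rw [hlogv] at hA hB
    have hsum : a * (1 - Real.log (f z)) + b * (1 - Real.log (f z)) = 1 - Real.log (f z) := by
      linear_combination (1 - Real.log (f z)) * hab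
    linarith [hA, hB, hC, hDq, hvpqz, hsum]
  · intro x _
    ring
end

section
/- Suppose Q is symmetric and copositive on the recession cone D_∞ = { v : Dv ≥ 0 } (i.e., vᵀQv ≥ 0 for all v with Dv ≥ 0). Then for v ∈ D_∞: vᵀQv = 0 if and only if there exists η ≥ 0 with Qv - Dᵀη = 0 and ηᵀ(Dv) = 0. -/
open scoped Matrix
open Finset

theorem farkas_aux (m : ℕ) : ∀ (k : ℕ) (a : Fin k → Fin m → ℝ) (c : Fin m → ℝ),
    (∀ d : Fin m → ℝ, (∀ i, 0 ≤ a i ⬝ᵥ d) → 0 ≤ c ⬝ᵥ d) →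
    ∃ η : Fin k → ℝ, (∀ i, 0 ≤ η i) ∧ c = ∑ i, η i • a i := by
  intro k
  induction k with
  | zero =>
    intro a c h
    refine ⟨Fin.elim0, fun i => i.elim0, ?_⟩
    have h1 : 0 ≤ c ⬝ᵥ (-c) := h (-c) (fun i => i.elim0)
    have h2 : 0 ≤ c ⬝ᵥ c := Finset.sum_nonneg fun i _ => mul_self_nonneg _
    rw [dotProduct_neg] at h1
    have : c ⬝ᵥ c = 0 := le_antisymm (by linarith) h2
    rw [dotProduct_self_eq_zero] at this
    simp [this]
  | succ k ih =>
    intro a c h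
    by_cases hcase : ∀ d : Fin m → ℝ, (∀ i : Fin k, 0 ≤ a i.castSucc ⬝ᵥ d) → 0 ≤ c ⬝ᵥ d
    · obtain ⟨η, hη, hc⟩ := ih (fun i => a i.castSucc) c hcase
      refine ⟨Fin.snoc η 0, ?_, ?_⟩
      · intro i
        refine Fin.lastCases ?_ ?_ i <;> simp [hη]
      · rw [Fin.sum_univ_castSucc]
        simp [hc]
    · push_neg at hcase
      obtain ⟨d0, hd0, hcd0⟩ := hcase
      set w := a (Fin.last k) with hw
      have hβ : w ⬝ᵥ d0 < 0 := by
        by_contra hβ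
        push_neg at hβ
        have : 0 ≤ c ⬝ᵥ d0 := by
          apply h
          intro i
          refine Fin.lastCases ?_ ?_ i
          · exact hβ
          · exact hd0
        linarith
      set β := w ⬝ᵥ d0 with hβdef
      set proj : (Fin m → ℝ) → (Fin m → ℝ) := fun u => u - ((u ⬝ᵥ d0) / β) • w with hproj
      have key : ∀ (u d : Fin m → ℝ), proj u ⬝ᵥ d = u ⬝ᵥ d - (u ⬝ᵥ d0) / β * (w ⬝ᵥ d) := by
        intro u d
        simp [hproj, sub_dotProduct, smul_dotProduct, smul_eq_mul]
      have hyp : ∀ d : Fin m → ℝ, (∀ i : Fin k, 0 ≤ proj (a i.castSucc) ⬝ᵥ d) →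
          0 ≤ proj c ⬝ᵥ d := by
        intro d hd
        set d' := d - ((w ⬝ᵥ d) / β) • d0 with hd'
        have hwd' : w ⬝ᵥ d' = 0 := by
          simp only [hd', dotProduct_sub, dotProduct_smul, smul_eq_mul]
          rw [← hβdef, div_mul_cancel₀ _ hβ.ne, sub_self]
        have hsym : ∀ u : Fin m → ℝ, u ⬝ᵥ d' = proj u ⬝ᵥ d := by
          intro u
          rw [key]
          simp only [hd', dotProduct_sub, dotProduct_smul, smul_eq_mul]
          ring
        have h0 : 0 ≤ c ⬝ᵥ d' := by
          apply h
          intro i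
          refine Fin.lastCases ?_ ?_ i
          · rw [← hw, hwd']
          · intro i
            rw [hsym]
            exact hd i
        rw [hsym] at h0
        exact h0
      obtain ⟨η, hη, hc⟩ := ih (fun i => proj (a i.castSucc)) (proj c) hyp
      set μ : ℝ := (c ⬝ᵥ d0) / β - ∑ i : Fin k, η i * ((a i.castSucc ⬝ᵥ d0) / β) with hμ
      have hμ0 : 0 ≤ μ := by
        have h1 : 0 < (c ⬝ᵥ d0) / β := div_pos_of_neg_of_neg hcd0 hβ
        have h3 : ∑ i : Fin k, η i * ((a i.castSucc ⬝ᵥ d0) / β) ≤ 0 :=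
          Finset.sum_nonpos fun i _ => mul_nonpos_of_nonneg_of_nonpos (hη i)
            (div_nonpos_of_nonneg_of_nonpos (hd0 i) hβ.le)
        rw [hμ]; linarith
      refine ⟨Fin.snoc η μ, ?_, ?_⟩
      · intro i
        refine Fin.lastCases ?_ ?_ i <;> simp [hη, hμ0]
      · rw [Fin.sum_univ_castSucc]
        simp only [Fin.snoc_castSucc, Fin.snoc_last]
        have expand : c = proj c + ((c ⬝ᵥ d0) / β) • w := by
          simp [hproj]
        rw [expand, hc, hμ]
        have step : ∀ i : Fin k, η i • proj (a i.castSucc)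
            = η i • a i.castSucc - (η i * ((a i.castSucc ⬝ᵥ d0) / β)) • w := by
          intro i
          simp [hproj, smul_sub, smul_smul]
        simp_rw [step, Finset.sum_sub_distrib, ← Finset.sum_smul]
        module

theorem copositive_zero_iff_kkt (m k : ℕ)
    (Q : Matrix (Fin m) (Fin m) ℝ) (hQsym : Q.IsSymm)
    (D : Matrix (Fin k) (Fin m) ℝ)
    (hcop : ∀ v : Fin m → ℝ, (∀ i, 0 ≤ D.mulVec v i) → 0 ≤ v ⬝ᵥ Q.mulVec v)
    (v : Fin m → ℝ) (hv : ∀ i, 0 ≤ D.mulVec v i) :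
    v ⬝ᵥ Q.mulVec v = 0 ↔
      ∃ η : Fin k → ℝ, (∀ i, 0 ≤ η i) ∧
        Q.mulVec v = Dᵀ.mulVec η ∧ η ⬝ᵥ D.mulVec v = 0 := by
  constructor
  · intro hzero
    classical
    -- replace inactive rows by 0
    set a : Fin k → Fin m → ℝ := fun i => if D.mulVec v i = 0 then D i else 0 with ha
    -- key claim: Qv is in dual of {d : a i ⬝ d ≥ 0}
    have hclaim : ∀ d : Fin m → ℝ, (∀ i, 0 ≤ a i ⬝ᵥ d) → 0 ≤ Q.mulVec v ⬝ᵥ d := by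
      intro d hd
      by_contra hneg
      push_neg at hneg
      set c : ℝ := 2 * (d ⬝ᵥ Q.mulVec v) with hcdef
      have hc : c < 0 := by
        have : Q.mulVec v ⬝ᵥ d = d ⬝ᵥ Q.mulVec v := dotProduct_comm _ _
        rw [hcdef]; linarith [this ▸ hneg]
      set q : ℝ := d ⬝ᵥ Q.mulVec d with hqdef
      -- choose a small positive t
      set b : Fin k → ℝ := fun i =>
        if D.mulVec d i < 0 ∧ 0 < D.mulVec v i then D.mulVec v i / (-(D.mulVec d i)) else 1
        with hb
      set t0 : ℝ := (-c) / (2 * (|q| + 1)) with ht0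
      have ht0pos : 0 < t0 := by
        apply div_pos (by linarith)
        positivity
      set T : Finset ℝ := insert t0 (Finset.univ.image b) with hT
      have hTne : T.Nonempty := ⟨t0, by simp [hT]⟩
      set t : ℝ := T.min' hTne with ht
      have htmem : t ∈ T := Finset.min'_mem _ _
      have hbpos : ∀ i, 0 < b i := by
        intro i
        rw [hb]
        by_cases hi : D.mulVec d i < 0 ∧ 0 < D.mulVec v i
        · simp only [hi, if_true]
          exact div_pos hi.2 (by linarith [hi.1])
        · simp [hi]
      have htpos : 0 < t := by
        rw [hT] at htmem
        rcases Finset.mem_insert.mp htmem with h1 | h1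
        · rw [ht, h1] at *; exact ht0pos
        · obtain ⟨i, _, hi⟩ := Finset.mem_image.mp h1
          rw [ht, ← hi] at *
          exact hi ▸ (hi ▸ hbpos i)
      have htle0 : t ≤ t0 := Finset.min'_le _ _ (by simp [hT])
      have htleb : ∀ i, t ≤ b i := fun i => Finset.min'_le _ _ (by simp [hT])
      -- v + t • d is feasible
      have hfeas : ∀ i, 0 ≤ D.mulVec (v + t • d) i := by
        intro i
        rw [Matrix.mulVec_add, Matrix.mulVec_smul]
        simp only [Pi.add_apply, Pi.smul_apply, smul_eq_mul]
        by_cases hdi : 0 ≤ D.mulVec d i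
        · have := hv i; nlinarith
        · push_neg at hdi
          have hvi : 0 < D.mulVec v i := by
            rcases lt_or_eq_of_le (hv i) with h1 | h1
            · exact h1
            · exfalso
              have : a i ⬝ᵥ d = D.mulVec d i := by
                rw [ha]; simp only [← h1, if_pos rfl]; rfl
              linarith [this ▸ hd i]
          have hbi : b i = D.mulVec v i / (-(D.mulVec d i)) := by
            rw [hb]; simp [hdi, hvi]
          have := htleb i
          rw [hbi] at this
          have h2 : t * (-(D.mulVec d i)) ≤ D.mulVec v i := by
            rw [le_div_iff₀ (by linarith)] at this
            linarith
          linarith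
      -- expand the quadratic
      have hexp : (v + t • d) ⬝ᵥ Q.mulVec (v + t • d) = t * (c + t * q) := by
        rw [Matrix.mulVec_add, Matrix.mulVec_smul]
        simp only [add_dotProduct, dotProduct_add, smul_dotProduct,
          dotProduct_smul, smul_eq_mul]
        have hsymm : v ⬝ᵥ Q.mulVec d = d ⬝ᵥ Q.mulVec v := by
          rw [Matrix.dotProduct_mulVec, ← Matrix.mulVec_transpose, hQsym.eq,
            dotProduct_comm]
        rw [hzero, hsymm, hcdef, hqdef]
        ring
      have hnonneg := hcop _ hfeas
      rw [hexp] at hnonneg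
      -- but t*(c + t*q) < 0
      have h4 : t * q ≤ t * (|q| + 1) := by
        apply mul_le_mul_of_nonneg_left _ htpos.le
        have := le_abs_self q; linarith
      have h5 : t * (|q| + 1) ≤ t0 * (|q| + 1) := by
        apply mul_le_mul_of_nonneg_right htle0
        positivity
      have h6 : t0 * (|q| + 1) = -c / 2 := by
        rw [ht0]; field_simp
      have h7 : c + t * q < 0 := by
        rw [h6] at h5; linarith
      nlinarith
    obtain ⟨η, hη, hQv⟩ := farkas_aux m k a (Q.mulVec v) hclaim
    set η' : Fin k → ℝ := fun i => if D.mulVec v i = 0 then η i else 0 with hη'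
    refine ⟨η', fun i => ?_, ?_, ?_⟩
    · rw [hη']; by_cases hi : D.mulVec v i = 0 <;> simp [hi, hη]
    · funext j
      rw [hQv]
      simp only [Finset.sum_apply, Pi.smul_apply, smul_eq_mul]
      rw [Matrix.mulVec, dotProduct]
      apply Finset.sum_congr rfl
      intro i _
      rw [Matrix.transpose_apply, ha, hη']
      by_cases hi : D.mulVec v i = 0 <;> simp [hi, mul_comm]
    · rw [dotProduct]
      apply Finset.sum_eq_zero
      intro i _
      rw [hη']
      by_cases hi : D.mulVec v i = 0 <;> simp [hi]
  · rintro ⟨η, hη, hQv, hcomp⟩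
    rw [hQv, Matrix.dotProduct_mulVec, Matrix.vecMul_transpose, dotProduct_comm]
    exact hcomp
end

section
/- Let f : [0,∞) → ℝ be a continuous concave function and define θ(t) = f(|t|) on ℝ. Then θ is a difference of convex functions on ℝ if and only if the right derivative f'(0;+) = lim_{τ↓0} (f(τ) - f(0))/τ exists and is finite. Moreover, when f'(0;+) ≤ 0, θ is concave on ℝ. -/
open Set Filter Topology

/-! The limit in question is the right derivative `d` of `f` at `0`. Convex functions on `ℝ` have
right derivatives everywhere, hence so does a difference of two of them, and `θ = f` on `[0, ∞)`.
Conversely, `F t = f t - d * t` is concave with right derivative `0` at `0`, hence nonincreasing on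
`[0, ∞)`, so `F ∘ |·|` is concave and `θ t = |d| * |t| - ((|d| - d) * |t| - F |t|)` is dc.
When `d ≤ 0` the same argument applied to `f` itself shows that `θ` is concave. -/

lemma convexOn_univ_abs : ConvexOn ℝ univ (fun t : ℝ => |t|) :=
  convexOn_univ_norm

lemma hasDerivWithinAt_Ioi_zero_iff_tendsto_div {f : ℝ → ℝ} {d : ℝ} :
    HasDerivWithinAt f d (Ioi 0) 0 ↔ Tendsto (fun τ => (f τ - f 0) / τ) (𝓝[>] 0) (𝓝 d) := by
  rw [hasDerivWithinAt_iff_tendsto_slope' self_notMem_Ioi, slope_fun_def_field]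
  simp only [sub_zero]

lemma exists_hasDerivWithinAt_Ioi_of_eqOn_sub {f g h : ℝ → ℝ} {a : ℝ}
    (hg : ConvexOn ℝ univ g) (hh : ConvexOn ℝ univ h) (hf : EqOn f (g - h) (Ici a)) :
    ∃ d, HasDerivWithinAt f d (Ioi a) a := by
  have ha : a ∈ interior univ := by simp
  exact ⟨_, ((hg.hasDerivWithinAt_rightDeriv_of_mem_interior ha).sub
    (hh.hasDerivWithinAt_rightDeriv_of_mem_interior ha)).congr
    (fun x hx => hf (Ioi_subset_Ici_self hx)) (hf self_mem_Ici)⟩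

lemma ConcaveOn.antitoneOn_of_hasDerivWithinAt_Ioi {F : ℝ → ℝ} {a d : ℝ}
    (hF : ConcaveOn ℝ (Ici a) F) (hd : HasDerivWithinAt F d (Ioi a) a) (hd0 : d ≤ 0) :
    AntitoneOn F (Ici a) := by
  intro x hx y hy hxy
  rcases hxy.eq_or_lt with rfl | hxy
  · exact le_rfl
  have hslope : slope F x y ≤ 0 := by
    rcases (mem_Ici.1 hx).eq_or_lt with rfl | hax
    · exact (hF.slope_le_of_hasDerivWithinAt_Ioi hx hy hxy hd).trans hd0
    · calc slope F x y ≤ slope F a x := by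
            simpa only [slope_def_field] using hF.slope_anti_adjacent self_mem_Ici hy hax hxy
        _ ≤ d := hF.slope_le_of_hasDerivWithinAt_Ioi self_mem_Ici hx hax hd
        _ ≤ 0 := hd0
  rw [slope_def_field, div_nonpos_iff] at hslope
  rcases hslope with ⟨-, h⟩ | ⟨h, -⟩ <;> linarith

lemma ConcaveOn.comp_abs {F : ℝ → ℝ} (hF : ConcaveOn ℝ (Ici 0) F)
    (hF' : AntitoneOn F (Ici 0)) : ConcaveOn ℝ univ (fun t => F |t|) := by
  have himage : (fun t : ℝ => |t|) '' univ = Ici 0 := by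
    ext x
    simp only [image_univ, mem_range, mem_Ici]
    exact ⟨fun ⟨t, ht⟩ => ht ▸ abs_nonneg t, fun hx => ⟨x, abs_of_nonneg hx⟩⟩
  rw [← himage] at hF hF'
  exact hF.comp_convexOn convexOn_univ_abs hF'

lemma ConcaveOn.exists_convexOn_sub_eq_comp_abs {f : ℝ → ℝ} {d : ℝ}
    (hf : ConcaveOn ℝ (Ici 0) f) (hd : HasDerivWithinAt f d (Ioi 0) 0) :
    ∃ g h : ℝ → ℝ, ConvexOn ℝ univ g ∧ ConvexOn ℝ univ h ∧ ∀ t, f |t| = g t - h t := by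
  set F : ℝ → ℝ := fun t => f t - d * t
  have hF : ConcaveOn ℝ (Ici 0) F := hf.sub ((LinearMap.mul ℝ ℝ d).convexOn (convex_Ici 0))
  have hF' : HasDerivWithinAt F 0 (Ioi 0) 0 := by
    have := hd.sub ((hasDerivWithinAt_id 0 (Ioi 0)).const_mul d)
    rwa [mul_one, sub_self] at this
  have hFabs := hF.comp_abs (hF.antitoneOn_of_hasDerivWithinAt_Ioi hF' le_rfl)
  refine ⟨fun t => |d| * |t|, fun t => (|d| - d) * |t| - F |t|, ?_, ?_, fun t => by ring⟩
  · exact convexOn_univ_abs.smul (abs_nonneg d)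
  · exact (convexOn_univ_abs.smul (sub_nonneg.2 (le_abs_self d))).sub hFabs

theorem folded_concave_dc_iff_general (f : ℝ → ℝ)
    (hfconc : ConcaveOn ℝ (Set.Ici 0) f)
    (θ : ℝ → ℝ) (hθ : ∀ t, θ t = f |t|) :
    ((∃ g h : ℝ → ℝ, ConvexOn ℝ Set.univ g ∧ ConvexOn ℝ Set.univ h ∧
        ∀ t, θ t = g t - h t) ↔
      ∃ d : ℝ, Filter.Tendsto (fun τ => (f τ - f 0) / τ)
        (nhdsWithin 0 (Set.Ioi 0)) (nhds d)) ∧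
    (∀ d : ℝ, Filter.Tendsto (fun τ => (f τ - f 0) / τ)
        (nhdsWithin 0 (Set.Ioi 0)) (nhds d) → d ≤ 0 →
      ConcaveOn ℝ Set.univ θ) := by
  obtain rfl : θ = fun t => f |t| := funext hθ
  simp only [← hasDerivWithinAt_Ioi_zero_iff_tendsto_div]
  refine ⟨⟨?_, fun ⟨d, hd⟩ => hfconc.exists_convexOn_sub_eq_comp_abs hd⟩, fun d hd hd0 =>
    hfconc.comp_abs (hfconc.antitoneOn_of_hasDerivWithinAt_Ioi hd hd0)⟩
  rintro ⟨g, h, hg, hh, hgh⟩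
  refine exists_hasDerivWithinAt_Ioi_of_eqOn_sub hg hh fun t ht => ?_
  simpa [abs_of_nonneg (mem_Ici.1 ht)] using hgh t

theorem folded_concave_dc_iff (f : ℝ → ℝ)
    (hfcont : ContinuousOn f (Set.Ici 0))
    (hfconc : ConcaveOn ℝ (Set.Ici 0) f)
    (θ : ℝ → ℝ) (hθ : ∀ t, θ t = f |t|) :
    ((∃ g h : ℝ → ℝ, ConvexOn ℝ Set.univ g ∧ ConvexOn ℝ Set.univ h ∧
        ∀ t, θ t = g t - h t) ↔
      ∃ d : ℝ, Filter.Tendsto (fun τ => (f τ - f 0) / τ)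
        (nhdsWithin 0 (Set.Ioi 0)) (nhds d)) ∧
    (∀ d : ℝ, Filter.Tendsto (fun τ => (f τ - f 0) / τ)
        (nhdsWithin 0 (Set.Ioi 0)) (nhds d) → d ≤ 0 →
      ConcaveOn ℝ Set.univ θ) :=
  folded_concave_dc_iff_general f hfconc θ hθ
end
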